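/- arXiv:1211.5346 — 3 statements merged into one kernel-verified Lean document; each statement's English description precedes it below -/
import Mathlib

section
/- Let N be a proper normal subgroup of a finite group G, let U₁,…,U_h be proper subgroups of G containing N, and let V₁,…,V_k be proper subgroups with V_iN = G and indices β_i = |G:V_i| with β₁ ≤ … ≤ β_k. Suppose G = U₁ ∪ … ∪ U_h ∪ V₁ ∪ … ∪ V_k but G ≠ U₁ ∪ … ∪ U_h, and β₁ = k. Then β₁ = β₂ = … = β_k and V_i ∩ V_j ⊆ U₁ ∪ … ∪ U_h for all i ≠ j. -/
def IsCover {G : Type*} [Group G] (𝒳 : Finset (Subgroup G)) : Prop :=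
  (∀ X ∈ 𝒳, X ≠ ⊤) ∧ ∀ g : G, ∃ X ∈ 𝒳, g ∈ X

noncomputable def covNum (G : Type*) [Group G] : ℕ :=
  sInf {n | ∃ 𝒳 : Finset (Subgroup G), IsCover 𝒳 ∧ 𝒳.card = n}

def IsMinimalCover {G : Type*} [Group G] (𝒳 : Finset (Subgroup G)) : Prop :=
  IsCover 𝒳 ∧ 𝒳.card = covNum G

def IsDiagonalType {H₁ H₂ : Type*} [Group H₁] [Group H₂] (M : Subgroup (H₁ × H₂)) : Prop :=
  ∃ (N₁ : Subgroup H₁) (N₂ : Subgroup H₂) (h₁ : N₁.Normal) (h₂ : N₂.Normal),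
    haveI := h₁
    haveI := h₂
    IsSimpleGroup (H₁ ⧸ N₁) ∧ ∃ φ : (H₁ ⧸ N₁) ≃* (H₂ ⧸ N₂),
      (M : Set (H₁ × H₂)) = {x | φ (QuotientGroup.mk x.1) = QuotientGroup.mk x.2}

/-!
Take `g` outside every `U i`. As `N ≤ U i`, the whole coset `gN` avoids the `U i`, so the `V j`
cover it. Since `V j ⊔ N = ⊤`, the piece `gN ∩ V j` is a translate of `V j ⊓ N`, which has
`|N| / |G : V j| ≤ |N| / k` elements. Covering the `|N|` points of `gN` by `k` such pieces forces
every index to be `k` and the pieces to be pairwise disjoint; for `g ∈ V i ⊓ V j` outside the `U l`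
this disjointness fails.
-/

namespace Finset

theorem sum_card_inter_eq_sum_card_filter_mem {α ι : Type*} [DecidableEq α] [Fintype ι]
    (s : Finset α) (A : ι → Finset α) :
    ∑ j, #(s ∩ A j) = ∑ x ∈ s, #{j | x ∈ A j} := by
  simp_rw [← filter_mem_eq_inter, card_eq_sum_ones, sum_filter]
  exact sum_comm

theorem card_inter_mul_card_eq_and_unique_of_cover {α ι : Type*} [DecidableEq α]
    [Fintype ι] {s : Finset α} {A : ι → Finset α} (hcov : ∀ x ∈ s, ∃ j, x ∈ A j)
    (hle : ∀ j, #(s ∩ A j) * Fintype.card ι ≤ #s) :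
    (∀ j, #(s ∩ A j) * Fintype.card ι = #s) ∧
      ∀ x ∈ s, ∀ i j, x ∈ A i → x ∈ A j → i = j := by
  have hc : ∀ x ∈ s, 1 ≤ #{j | x ∈ A j} := fun x hx ↦
    let ⟨j, hj⟩ := hcov x hx; card_pos.2 ⟨j, by simpa using hj⟩
  have hs : #s ≤ ∑ j, #(s ∩ A j) := by
    rw [sum_card_inter_eq_sum_card_filter_mem, card_eq_sum_ones]
    exact sum_le_sum hc
  have hsum : ∑ j, #(s ∩ A j) * Fintype.card ι = ∑ _j : ι, #s := by
    refine le_antisymm (sum_le_sum fun j _ ↦ hle j) ?_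
    rw [← sum_mul, sum_const, card_univ, smul_eq_mul, mul_comm]
    exact Nat.mul_le_mul_right _ hs
  refine ⟨fun j ↦ (sum_eq_sum_iff_of_le fun j _ ↦ hle j).1 hsum j (mem_univ j), ?_⟩
  intro x hx i j hi hj
  have hk : 0 < Fintype.card ι := Fintype.card_pos_iff.2 ⟨i⟩
  have hs' : ∑ x ∈ s, 1 = ∑ x ∈ s, #{j | x ∈ A j} := by
    rw [← card_eq_sum_ones, ← sum_card_inter_eq_sum_card_filter_mem]
    refine le_antisymm hs (Nat.le_of_mul_le_mul_right ?_ hk)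
    rw [sum_mul, hsum, sum_const, card_univ, smul_eq_mul, mul_comm]
  have hx1 := ((sum_eq_sum_iff_of_le hc).1 hs' x hx).ge
  exact card_le_one.1 hx1 i (by simpa using hi) j (by simpa using hj)

end Finset

open scoped Pointwise

namespace Subgroup

variable {G : Type*} [Group G]

theorem card_inf_mul_index_of_sup_eq_top [Finite G] {H K : Subgroup G} [K.Normal]
    (h : H ⊔ K = ⊤) : Nat.card ↥(H ⊓ K) * H.index = Nat.card K := by
  have hH : Nat.card ↥(H ⊓ K) * K.index = Nat.card H := by
    rw [← relIndex_top_right, ← h, relIndex_sup_right, ← inf_relIndex_left,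
      ← relIndex_bot_left, ← relIndex_bot_left, relIndex_mul_relIndex _ _ _ bot_le inf_le_left]
  refine Nat.eq_of_mul_eq_mul_right (Nat.pos_of_ne_zero K.index_ne_zero_of_finite) ?_
  rw [mul_right_comm, hH, card_mul_index, card_mul_index]

theorem ncard_smul_inter_of_sup_eq_top {H K : Subgroup G} [K.Normal] (h : H ⊔ K = ⊤) (g : G) :
    (g • (K : Set G) ∩ H).ncard = Nat.card ↥(H ⊓ K) := by
  obtain ⟨a, ha, b, hb, rfl⟩ : g ∈ (H : Set G) * (K : Set G) := by
    rw [← mul_normal, h]; trivial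
  rw [mul_smul, smul_coe_set hb, ← smul_coe_set (s := H) ha, ← Set.smul_set_inter,
    Set.ncard_smul_set, Set.inter_comm, ← coe_inf]
  rfl

theorem index_eq_card_and_unique_of_smul_subset_iUnion [Finite G] {ι : Type*} [Fintype ι]
    {N : Subgroup G} [N.Normal] {V : ι → Subgroup G} (hVN : ∀ j, V j ⊔ N = ⊤)
    (hVk : ∀ j, Fintype.card ι ≤ (V j).index) {g : G}
    (hcov : g • (N : Set G) ⊆ ⋃ j, (V j : Set G)) :
    (∀ j, (V j).index = Fintype.card ι) ∧ ∀ i j, g ∈ V i → g ∈ V j → i = j := by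
  classical
  have := Fintype.ofFinite G
  set s := (g • (N : Set G)).toFinset
  have hs : s.card = Nat.card N := by
    rw [← Set.ncard_eq_toFinset_card', Set.ncard_smul_set]; rfl
  have hpiece : ∀ j, (s ∩ (V j : Set G).toFinset).card * (V j).index = s.card := fun j ↦ by
    rw [← Set.toFinset_inter, ← Set.ncard_eq_toFinset_card', ncard_smul_inter_of_sup_eq_top (hVN j),
      card_inf_mul_index_of_sup_eq_top (hVN j), hs]
  obtain ⟨hk, huniq⟩ := Finset.card_inter_mul_card_eq_and_unique_of_cover
    (A := fun j ↦ (V j : Set G).toFinset) (fun x hx ↦ by simpa using hcov (Set.mem_toFinset.1 hx))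
    (fun j ↦ hpiece j ▸ Nat.mul_le_mul_left _ (hVk j))
  refine ⟨fun j ↦ ?_, fun i j hi hj ↦ huniq g ?_ i j (by simpa using hi) (by simpa using hj)⟩
  · have hpos : 0 < (s ∩ (V j : Set G).toFinset).card := by
      refine Nat.pos_of_ne_zero fun h0 ↦ (Nat.card_pos (α := N)).ne' ?_
      rw [← hs, ← hpiece j, h0, zero_mul]
    exact Nat.eq_of_mul_eq_mul_left hpos ((hpiece j).trans (hk j).symm)
  · exact Set.mem_toFinset.2 ((mem_leftCoset_iff g).2 (by simp))

end Subgroup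

theorem stmt7_general (G : Type*) [Group G] [Finite G] (N : Subgroup G) (hN : N.Normal)
    (h k : ℕ) (hk : 0 < k)
    (U : Fin h → Subgroup G) (hU : ∀ i, N ≤ U i ∧ U i ≠ ⊤)
    (V : Fin k → Subgroup G) (hV : ∀ j, V j ≠ ⊤ ∧ V j ⊔ N = ⊤)
    (hmono : ∀ i j : Fin k, i ≤ j → (V i).index ≤ (V j).index)
    (hcover : ∀ g : G, (∃ i, g ∈ U i) ∨ (∃ j, g ∈ V j))
    (hnotU : ¬ ∀ g : G, ∃ i, g ∈ U i)
    (heq : (V ⟨0, hk⟩).index = k) :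
    (∀ j, (V j).index = k) ∧
      ∀ i j : Fin k, i ≠ j → ∀ g ∈ V i ⊓ V j, ∃ l, g ∈ U l := by
  have hVk : ∀ j, Fintype.card (Fin k) ≤ (V j).index := fun j ↦ by
    rw [Fintype.card_fin, ← heq]
    exact hmono _ j (Nat.zero_le _)
  have hcoset : ∀ g : G, (∀ l, g ∉ U l) →
      (∀ j, (V j).index = k) ∧ ∀ i j, g ∈ V i → g ∈ V j → i = j := by
    intro g hg
    have hgN : g • (N : Set G) ⊆ ⋃ j, (V j : Set G) := by
      intro x hx
      have hxU : ∀ l, x ∉ U l := fun l hxl ↦ hg l <| by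
        simpa using (U l).mul_mem hxl ((hU l).1 (inv_mem ((mem_leftCoset_iff g).1 hx)))
      simpa using (hcover x).resolve_left (by simpa using hxU)
    simpa using Subgroup.index_eq_card_and_unique_of_smul_subset_iUnion (N := N)
      (fun j ↦ (hV j).2) hVk hgN
  obtain ⟨g₀, hg₀⟩ : ∃ g, ∀ l, g ∉ U l := by simpa using hnotU
  refine ⟨(hcoset g₀ hg₀).1, fun i j hij g hg ↦ ?_⟩
  by_contra! hgU
  exact hij ((hcoset g hgU).2 i j hg.1 hg.2)

theorem stmt7 (G : Type*) [Group G] [Finite G] (N : Subgroup G) (hN : N.Normal)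
    (hNprop : N ≠ ⊤) (h k : ℕ) (hk : 0 < k)
    (U : Fin h → Subgroup G) (hU : ∀ i, N ≤ U i ∧ U i ≠ ⊤)
    (V : Fin k → Subgroup G) (hV : ∀ j, V j ≠ ⊤ ∧ V j ⊔ N = ⊤)
    (hmono : ∀ i j : Fin k, i ≤ j → (V i).index ≤ (V j).index)
    (hcover : ∀ g : G, (∃ i, g ∈ U i) ∨ (∃ j, g ∈ V j))
    (hnotU : ¬ ∀ g : G, ∃ i, g ∈ U i)
    (heq : (V ⟨0, hk⟩).index = k) :
    (∀ j, (V j).index = k) ∧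
      ∀ i j : Fin k, i ≠ j → ∀ g ∈ V i ⊓ V j, ∃ l, g ∈ U l :=
  stmt7_general G N hN h k hk U hU V hV hmono hcover hnotU heq
end

section
/- Let 𝒳 = {X₁,…,X_σ} be a minimal cover of G = H₁ × H₂. If some X_i is contained in a maximal subgroup of diagonal type of prime index p, then σ(G) = p + 1, every X_i is a normal subgroup of G of index p, and the intersection of all X_i has index p² in G. -/
/-!
The diagonal subgroup `M` is the preimage of the graph of `φ` in `H₁ ⧸ N₁ × H₂ ⧸ N₂`. Its index
`p` forces both quotients to have order `p`, so `M` is normal (index `p` in a group of order `p²`)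
and the `p + 1` lines of `H₁ ⧸ N₁ × H₂ ⧸ N₂` pull back to a cover of `G`: `σ(G) ≤ p + 1`.

Now let `M ⊴ G` have prime index `p` and contain a member of a minimal cover `𝒳` with
`|𝒳| ≤ p + 1`. Every coset `gM ≠ M` is covered by the members `X ⊄ M`, each meeting it in a coset
of `X ⊓ M`, which has density `1 / |G : X|` in `M`; so `∑ 1 / |G : X| ≥ 1`. Once every member is
known to have index at least `p`, this forces exactly `p` such members, all of index `p`, whose
cosets in `gM` are disjoint. Hence the subgroups `X ⊓ M` all coincide with one `R` of index `p²`,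
`M \ R` must lie in the remaining member, which is therefore `M`, and `R` is normal with `G ⧸ R`
of order `p²`, hence abelian, so every member is normal.

The lower bound on the indices is the delicate step. If some members have index `< p`, the
intersection `A` of their normal cores has index prime to `p`, and `A ≤ X ⊔ (A ⊓ M)` for every
`X ⊄ M`. By minimality the enlarged subgroups `X ⊔ (A ⊓ M)` do not cover `G`; a point they miss
gives a coset of `A ⊓ M` covered only by members `X` with `X ⊔ (A ⊓ M) = ⊤` and index `≥ p`, so
there are at least `p` of them besides a small one, too many.
-/

open scoped Pointwise

namespace Subgroup

variable {G : Type*} [Group G]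

theorem eq_of_le_of_index_le {H K : Subgroup G} [H.FiniteIndex] (h : H ≤ K)
    (hi : H.index ≤ K.index) : H = K :=
  h.eq_of_not_lt fun hlt => (index_strictAnti hlt).not_ge hi

theorem sup_eq_top_of_index_eq_prime {p : ℕ} (hp : p.Prime) {X M : Subgroup G}
    (hM : M.index = p) (hXM : ¬ X ≤ M) : X ⊔ M = ⊤ := by
  have : M.FiniteIndex := ⟨hM ▸ hp.ne_zero⟩
  rcases (Nat.dvd_prime hp).mp (hM ▸ index_dvd_of_le le_sup_right : (X ⊔ M).index ∣ p) with h | h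
  · exact index_eq_one.mp h
  · exact absurd (le_sup_left.trans (eq_of_le_of_index_le le_sup_right (by rw [h, hM])).ge) hXM

theorem relIndex_eq_index_of_sup_eq_top {X D : Subgroup G} [D.Normal] [D.FiniteIndex]
    (h : X ⊔ D = ⊤) : X.relIndex D = X.index := by
  have key : X.relIndex D * D.index = D.index * X.index := by
    rw [← inf_relIndex_right, relIndex_mul_index inf_le_right, ← relIndex_mul_index inf_le_left,
      inf_relIndex_left, ← relIndex_sup_right X D, h, relIndex_top_right]
  exact Nat.eq_of_mul_eq_mul_right (Nat.pos_of_ne_zero FiniteIndex.index_ne_zero)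
    (key.trans (mul_comm _ _))

theorem le_of_diff_subset {H K X : Subgroup G} (hHK : ¬ H ≤ K)
    (h : (H : Set G) \ K ⊆ X) : H ≤ X := by
  obtain ⟨x₀, hx₀H, hx₀K⟩ := SetLike.not_le_iff_exists.mp hHK
  intro x hxH
  by_cases hxK : x ∈ K
  · have hx₀x : x₀ * x ∈ X :=
      h ⟨mul_mem hx₀H hxH, fun hK => hx₀K (by simpa using mul_mem hK (inv_mem hxK))⟩
    simpa using mul_mem (inv_mem (h ⟨hx₀H, hx₀K⟩)) hx₀x
  · exact h ⟨hxH, hxK⟩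

theorem index_inf_eq_mul_of_sup_eq_top {X M : Subgroup G} [M.Normal] [M.FiniteIndex]
    (h : X ⊔ M = ⊤) : (X ⊓ M).index = X.index * M.index := by
  rw [← relIndex_mul_index inf_le_right, inf_relIndex_right,
    relIndex_eq_index_of_sup_eq_top h]

theorem mem_of_pow_mem_of_coprime_index {M : Subgroup G} [M.Normal] {k : ℕ}
    (hk : M.index.Coprime k) {x : G} (hx : x ^ k ∈ M) : x ∈ M := by
  have h₁ : (x : G ⧸ M) ^ M.index = 1 := by
    rw [← QuotientGroup.mk_pow, QuotientGroup.eq_one_iff]; exact M.pow_index_mem x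
  have h₂ : (x : G ⧸ M) ^ k = 1 := by
    rw [← QuotientGroup.mk_pow, QuotientGroup.eq_one_iff]; exact hx
  have := pow_gcd_eq_one.mpr ⟨h₁, h₂⟩
  rwa [hk.gcd_eq_one, pow_one, QuotientGroup.eq_one_iff] at this

theorem index_normalCore_dvd_factorial (H : Subgroup G) [H.FiniteIndex] :
    H.normalCore.index ∣ H.index.factorial := by
  rw [normalCore_eq_ker, index_ker, index_eq_card, ← Nat.card_perm]
  exact card_subgroup_dvd_card _

theorem index_inf_dvd_of_normal (A B : Subgroup G) [A.Normal] :
    (A ⊓ B).index ∣ A.index * B.index := by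
  rw [← relIndex_mul_index inf_le_right, inf_relIndex_right]
  exact mul_dvd_mul_right (relIndex_dvd_index_of_normal A B) _

theorem exists_normal_not_dvd_index_le [Finite G] {p : ℕ} (hp : p.Prime)
    (s : Finset (Subgroup G)) (hs : ∀ X ∈ s, X.index < p) :
    ∃ A : Subgroup G, A.Normal ∧ ¬ p ∣ A.index ∧ ∀ X ∈ s, A ≤ X := by
  obtain ⟨hA, hpA⟩ : (s.inf normalCore).Normal ∧ ¬ p ∣ (s.inf normalCore).index := by
    refine Finset.inf_induction (p := fun A : Subgroup G => A.Normal ∧ ¬ p ∣ A.index)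
      ⟨inferInstance, by simpa using hp.one_lt.ne'⟩ ?_ ?_
    · rintro A ⟨hA, hpA⟩ B ⟨hB, hpB⟩
      refine ⟨inferInstance, fun hdvd => ?_⟩
      rcases hp.dvd_mul.mp (hdvd.trans (index_inf_dvd_of_normal A B)) with h | h
      exacts [hpA h, hpB h]
    · intro X hX
      refine ⟨normalCore_normal X, fun hdvd => ?_⟩
      exact (hs X hX).not_ge (hp.dvd_factorial.mp (hdvd.trans (index_normalCore_dvd_factorial X)))
  exact ⟨_, hA, hpA, fun X hX => (Finset.inf_le hX).trans (normalCore_le X)⟩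

theorem le_sup_inf_of_not_dvd_index {p : ℕ} (hp : p.Prime) {A M X : Subgroup G}
    [A.Normal] [M.Normal] (hM : M.index = p) (hpA : ¬ p ∣ A.index) (hXM : ¬ X ≤ M) :
    A ≤ X ⊔ A ⊓ M := by
  obtain ⟨x, hxX, hxM⟩ := SetLike.not_le_iff_exists.mp hXM
  have hyA : x ^ A.index ∈ A := A.pow_index_mem x
  have hyM : x ^ A.index ∉ M := fun h =>
    hxM (mem_of_pow_mem_of_coprime_index (hM ▸ hp.coprime_iff_not_dvd.mpr hpA) h)
  have hAM : A ⊔ M = ⊤ := sup_eq_top_of_index_eq_prime hp hM fun h => hyM (h hyA)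
  set B := (X ⊔ A ⊓ M) ⊓ A
  have hDB : A ⊓ M ≤ B := le_inf le_sup_right inf_le_left
  have hprod : (A ⊓ M).relIndex B * B.relIndex A = p := by
    rw [relIndex_mul_relIndex _ _ _ hDB inf_le_right, inf_relIndex_left, ← relIndex_sup_right,
      hAM, relIndex_top_right, hM]
  rcases Nat.prime_mul_iff.mp (hprod ▸ hp) with ⟨-, h⟩ | ⟨-, h⟩
  · exact (relIndex_eq_one.mp h).trans inf_le_left
  · exact absurd (relIndex_eq_one.mp h ⟨mem_sup_left (pow_mem hxX _), hyA⟩).2 hyM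

section CosetCover

variable {s : Finset (Subgroup G)} {D : Subgroup G} {g : G}

theorem exists_mem_subgroupOf_of_mul_mem (X D : Subgroup G) (g : G) :
    ∃ c : D, ∀ d : D, g * d ∈ X → c⁻¹ * d ∈ X.subgroupOf D := by
  by_cases h : ∃ c : D, g * c ∈ X
  · obtain ⟨c, hc⟩ := h
    refine ⟨c, fun d hd => ?_⟩
    rw [mem_subgroupOf, coe_mul, coe_inv, show (c : G)⁻¹ * d = (g * c)⁻¹ * (g * d) by group]
    exact mul_mem (inv_mem hc) hd
  · exact ⟨1, fun d hd => absurd ⟨d, hd⟩ h⟩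

theorem leftCoset_cover_of_coset_cover (hcov : ∀ d ∈ D, ∃ X ∈ s, g * d ∈ X) :
    ∃ c : Subgroup G → D, (⋃ X ∈ s, c X • (X.subgroupOf D : Set D) = Set.univ) ∧
      ∀ X : Subgroup G, ∀ d : D, g * d ∈ X → d ∈ c X • (X.subgroupOf D : Set D) := by
  choose c hc using fun X => exists_mem_subgroupOf_of_mul_mem X D g
  have hmem : ∀ X : Subgroup G, ∀ d : D, g * d ∈ X → d ∈ c X • (X.subgroupOf D : Set D) :=
    fun X d hd => mem_leftCoset_iff _ |>.mpr (hc X d hd)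
  refine ⟨c, Set.eq_univ_of_forall fun d => ?_, hmem⟩
  obtain ⟨X, hX, hdX⟩ := hcov d d.2
  exact Set.mem_biUnion hX (hmem X d hdX)

theorem one_le_sum_inv_relIndex_of_coset_cover (hcov : ∀ d ∈ D, ∃ X ∈ s, g * d ∈ X) :
    1 ≤ ∑ X ∈ s, (X.relIndex D : ℚ)⁻¹ :=
  have ⟨_, hcover, _⟩ := leftCoset_cover_of_coset_cover hcov
  one_le_sum_inv_index_of_leftCoset_cover hcover

theorem notMem_of_coset_cover_of_sum_eq_one [Finite G] (hcov : ∀ d ∈ D, ∃ X ∈ s, g * d ∈ X)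
    (hsum : ∑ X ∈ s, (X.relIndex D : ℚ)⁻¹ = 1) {X Y : Subgroup G} (hX : X ∈ s) (hY : Y ∈ s)
    (hXY : X ≠ Y) {d : G} (hd : d ∈ D) (hdX : g * d ∈ X) : g * d ∉ Y := fun hdY => by
  classical
  obtain ⟨c, hcover, hmem⟩ := leftCoset_cover_of_coset_cover hcov
  have hdisj := pairwiseDisjoint_leftCoset_cover_of_sum_inv_index_eq_one hcover hsum
    (Finset.mem_filter.mpr ⟨hX, inferInstanceAs (X.subgroupOf D).FiniteIndex⟩)
    (Finset.mem_filter.mpr ⟨hY, inferInstanceAs (Y.subgroupOf D).FiniteIndex⟩) hXY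
  exact Set.disjoint_left.mp hdisj (hmem X ⟨d, hd⟩ hdX) (hmem Y ⟨d, hd⟩ hdY)

theorem le_card_of_coset_cover (hcov : ∀ d ∈ D, ∃ X ∈ s, g * d ∈ X) {n : ℕ}
    (hle : ∀ X ∈ s, n ≤ X.relIndex D) : n ≤ s.card := by
  rcases n.eq_zero_or_pos with rfl | hn
  · exact Nat.zero_le _
  have hn' : (0 : ℚ) < n := by exact_mod_cast hn
  have : (1 : ℚ) ≤ s.card / n := calc
    1 ≤ ∑ X ∈ s, (X.relIndex D : ℚ)⁻¹ := one_le_sum_inv_relIndex_of_coset_cover hcov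
    _ ≤ ∑ _X ∈ s, (n : ℚ)⁻¹ :=
      Finset.sum_le_sum fun X hX => inv_anti₀ hn' (by exact_mod_cast hle X hX)
    _ = s.card / n := by rw [Finset.sum_const, nsmul_eq_mul, div_eq_mul_inv]
  exact_mod_cast (one_le_div hn').mp this

theorem relIndex_eq_of_coset_cover_of_card_eq (hcov : ∀ d ∈ D, ∃ X ∈ s, g * d ∈ X) {n : ℕ}
    (hle : ∀ X ∈ s, n ≤ X.relIndex D) (hcard : s.card = n) : ∀ X ∈ s, X.relIndex D = n := by
  have hn : (0 : ℚ) < n := by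
    obtain ⟨X, hX, -⟩ := hcov 1 D.one_mem
    exact_mod_cast hcard ▸ Finset.card_pos.mpr ⟨X, hX⟩
  have hterm : ∀ X ∈ s, (X.relIndex D : ℚ)⁻¹ ≤ (n : ℚ)⁻¹ :=
    fun X hX => inv_anti₀ hn (by exact_mod_cast hle X hX)
  have hsum : ∑ X ∈ s, (X.relIndex D : ℚ)⁻¹ = ∑ _X ∈ s, (n : ℚ)⁻¹ := by
    refine le_antisymm (Finset.sum_le_sum hterm) ?_
    rw [Finset.sum_const, nsmul_eq_mul, hcard, mul_inv_cancel₀ hn.ne']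
    exact one_le_sum_inv_relIndex_of_coset_cover hcov
  intro X hX
  exact_mod_cast inv_injective ((Finset.sum_eq_sum_iff_of_le hterm).mp hsum X hX)

end CosetCover

end Subgroup

theorem MonoidHom.index_graph {A B : Type*} [Group A] [Group B] [Finite A] (f : A →* B) :
    f.graph.index = Nat.card B := by
  have hcard : Nat.card f.graph = Nat.card A := Nat.card_congr
    { toFun := fun x => x.1.1
      invFun := fun a => ⟨(a, f a), rfl⟩
      left_inv := fun ⟨⟨_, _⟩, h⟩ => Subtype.ext (Prod.ext rfl h)
      right_inv := fun _ => rfl }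
  have := f.graph.index_mul_card
  rw [hcard, Nat.card_prod] at this
  exact Nat.eq_of_mul_eq_mul_right Nat.card_pos (this.trans (mul_comm _ _))

section Cover

variable {G : Type*} [Group G]

theorem IsCover.covNum_le {𝒴 : Finset (Subgroup G)} (h : IsCover 𝒴) : covNum G ≤ 𝒴.card :=
  Nat.sInf_le ⟨𝒴, h, rfl⟩

theorem IsCover.covNum_le_of_surjective {Q : Type*} [Group Q] {𝒴 : Finset (Subgroup Q)}
    (h : IsCover 𝒴) {f : G →* Q} (hf : Function.Surjective f) : covNum G ≤ 𝒴.card := by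
  classical
  refine (IsCover.covNum_le (𝒴 := 𝒴.image (Subgroup.comap f)) ⟨?_, fun g => ?_⟩).trans
    Finset.card_image_le
  · simp only [Finset.mem_image]
    rintro _ ⟨Y, hY, rfl⟩ htop
    exact h.1 Y hY (by rw [← Subgroup.map_comap_eq_self_of_surjective hf Y, htop,
      Subgroup.map_top_of_surjective f hf])
  · obtain ⟨Y, hY, hgY⟩ := h.2 (f g)
    exact ⟨Y.comap f, Finset.mem_image_of_mem _ hY, hgY⟩

theorem exists_isCover_prod_card_le {Q₁ Q₂ : Type*} [Group Q₁] [Group Q₂] {p : ℕ}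
    (hp : p.Prime) (h₁ : Nat.card Q₁ = p) (h₂ : Nat.card Q₂ = p) :
    ∃ 𝒴 : Finset (Subgroup (Q₁ × Q₂)), IsCover 𝒴 ∧ 𝒴.card ≤ p + 1 := by
  classical
  have : Fact p.Prime := ⟨hp⟩
  have : Finite Q₁ := Nat.finite_of_card_ne_zero (h₁ ▸ hp.ne_zero)
  have : Fintype Q₂ := @Fintype.ofFinite _ (Nat.finite_of_card_ne_zero (h₂ ▸ hp.ne_zero))
  have : Nontrivial Q₁ := Finite.one_lt_card_iff_nontrivial.mp (h₁ ▸ hp.one_lt)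
  obtain ⟨a, ha⟩ := exists_ne (1 : Q₁)
  have hpow : ∀ x : Q₁ × Q₂, x ^ p = 1 := fun x =>
    Prod.ext (h₁ ▸ pow_card_eq_one') (h₂ ▸ pow_card_eq_one')
  -- the kernel of the first projection, and the lines through `(a, y)`
  refine ⟨insert (MonoidHom.fst Q₁ Q₂).ker (Finset.univ.image fun y => Subgroup.zpowers (a, y)),
    ⟨?_, ?_⟩, ?_⟩
  · simp only [Finset.mem_insert, Finset.mem_image, Finset.mem_univ, true_and]
    rintro X (rfl | ⟨y, rfl⟩) htop
    · exact ha (htop ▸ Subgroup.mem_top _ : (a, (1 : Q₂)) ∈ (MonoidHom.fst Q₁ Q₂).ker)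
    · have hcard := Nat.card_zpowers (a, y)
      rw [htop, Subgroup.card_top, Nat.card_prod, h₁, h₂] at hcard
      have := orderOf_le_of_pow_eq_one hp.pos (hpow (a, y))
      nlinarith [hp.two_le]
  · rintro ⟨x₁, x₂⟩
    by_cases hx₁ : x₁ = 1
    · exact ⟨_, Finset.mem_insert_self _ _, hx₁⟩
    obtain ⟨k, hk⟩ :=
      (Submonoid.mem_powers_iff _ _).mp (mem_powers_of_prime_card h₁ ha (g' := x₁))
    have hcop : (Nat.card Q₂).Coprime k := h₂ ▸ hp.coprime_iff_not_dvd.mpr fun ⟨m, hm⟩ =>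
      hx₁ (by rw [← hk, hm, pow_mul, ← h₁, pow_card_eq_one', one_pow])
    refine ⟨_, Finset.mem_insert_of_mem (Finset.mem_image_of_mem _
      (Finset.mem_univ ((powCoprime hcop).symm x₂))), k, ?_⟩
    simp only [zpow_natCast, Prod.pow_mk, hk]
    exact congrArg _ ((powCoprime hcop).apply_symm_apply x₂)
  · calc _ ≤ (Finset.univ.image fun y => Subgroup.zpowers (a, y)).card + 1 :=
          Finset.card_insert_le _ _
      _ ≤ Fintype.card Q₂ + 1 := by gcongr; exact Finset.card_image_le
      _ = p + 1 := by rw [Fintype.card_eq_nat_card, h₂]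

open scoped Classical in
theorem IsCover.coset_cover_filter_not_le {𝒳 : Finset (Subgroup G)} (h𝒳 : IsCover 𝒳)
    {M : Subgroup G} {g : G} (hg : g ∉ M) :
    ∀ d ∈ M, ∃ X ∈ 𝒳.filter fun X => ¬ X ≤ M, g * d ∈ X := by
  intro d hd
  obtain ⟨X, hX, hgX⟩ := h𝒳.2 (g * d)
  refine ⟨X, Finset.mem_filter.mpr ⟨hX, fun hXM => hg ?_⟩, hgX⟩
  simpa using mul_mem (hXM hgX) (inv_mem hd)

end Cover

namespace IsMinimalCover

variable {G : Type*} [Group G] {𝒳 : Finset (Subgroup G)}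

theorem exists_forall_notMem_sup (hmin : IsMinimalCover 𝒳) {ℰ : Finset (Subgroup G)}
    (hℰ : ℰ.card < 𝒳.card) (D : Subgroup G) : ∃ g : G, ∀ X ∈ ℰ, X ⊔ D ≠ ⊤ → g ∉ X ⊔ D := by
  classical
  by_contra! h
  have hcover : IsCover ((ℰ.filter (· ⊔ D ≠ ⊤)).image (· ⊔ D)) := by
    refine ⟨fun Y hY => ?_, fun g => ?_⟩
    · obtain ⟨X, hX, rfl⟩ := Finset.mem_image.mp hY
      exact (Finset.mem_filter.mp hX).2
    · obtain ⟨X, hX, hXD, hg⟩ := h g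
      exact ⟨X ⊔ D, Finset.mem_image_of_mem _ (Finset.mem_filter.mpr ⟨hX, hXD⟩), hg⟩
  have := hcover.covNum_le.trans (Finset.card_image_le.trans (Finset.card_filter_le _ _))
  have := hmin.2
  omega

end IsMinimalCover

theorem IsDiagonalType.normal_and_covNum_le {H₁ H₂ : Type*} [Group H₁] [Group H₂] [Finite H₁]
    {M : Subgroup (H₁ × H₂)} (hM : IsDiagonalType M) {p : ℕ} (hp : p.Prime) (hMp : M.index = p) :
    M.Normal ∧ covNum (H₁ × H₂) ≤ p + 1 := by
  obtain ⟨N₁, N₂, _, _, -, φ, hMφ⟩ := hM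
  set χ := (QuotientGroup.mk' N₁).prodMap (QuotientGroup.mk' N₂)
  have hχ : Function.Surjective χ :=
    (QuotientGroup.mk'_surjective N₁).prodMap (QuotientGroup.mk'_surjective N₂)
  have hMχ : M = φ.toMonoidHom.graph.comap χ := SetLike.coe_injective hMφ
  have hgraph : φ.toMonoidHom.graph.index = p := by
    rw [← Subgroup.index_comap_of_surjective _ hχ, ← hMχ, hMp]
  have h₂ : Nat.card (H₂ ⧸ N₂) = p := (MonoidHom.index_graph _).symm.trans hgraph
  have h₁ : Nat.card (H₁ ⧸ N₁) = p := (Nat.card_congr φ.toEquiv).trans h₂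
  have : φ.toMonoidHom.graph.Normal := Subgroup.normal_of_index_eq_minFac_card <| by
    rw [hgraph, Nat.card_prod, h₁, h₂, ← sq, hp.pow_minFac two_ne_zero]
  obtain ⟨𝒴, h𝒴, h𝒴card⟩ := exists_isCover_prod_card_le hp h₁ h₂
  exact ⟨hMχ ▸ Subgroup.Normal.comap this χ, (h𝒴.covNum_le_of_surjective hχ).trans h𝒴card⟩

structure MinimalCoverUnder {G : Type*} [Group G] (𝒳 : Finset (Subgroup G)) (M : Subgroup G)
    (p : ℕ) : Prop where
  isMinimalCover : IsMinimalCover 𝒳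
  prime : p.Prime
  normal : M.Normal
  index_eq : M.index = p
  exists_le : ∃ X ∈ 𝒳, X ≤ M
  covNum_le : covNum G ≤ p + 1

namespace MinimalCoverUnder

open scoped Classical

variable {G : Type*} [Group G] {𝒳 : Finset (Subgroup G)} {M : Subgroup G} {p : ℕ}

theorem exists_notMem (h : MinimalCoverUnder 𝒳 M p) : ∃ g, g ∉ M := by
  obtain ⟨g, -, hg⟩ := SetLike.not_le_iff_exists.mp fun htop : ⊤ ≤ M => h.prime.one_lt.ne <| by
    rw [← h.index_eq, top_le_iff.mp htop, Subgroup.index_top]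
  exact ⟨g, hg⟩

theorem card_filter_not_le_lt (h : MinimalCoverUnder 𝒳 M p) :
    (𝒳.filter fun X => ¬ X ≤ M).card < 𝒳.card :=
  have ⟨X₁, hX₁, hX₁M⟩ := h.exists_le
  Finset.card_lt_card (Finset.filter_ssubset.mpr ⟨X₁, hX₁, not_not.mpr hX₁M⟩)

theorem exists_mem_not_le (h : MinimalCoverUnder 𝒳 M p) : ∃ X ∈ 𝒳, ¬ X ≤ M := by
  obtain ⟨g, hg⟩ := h.exists_notMem
  obtain ⟨X, hX, hgX⟩ := h.isMinimalCover.1.2 g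
  exact ⟨X, hX, fun hXM => hg (hXM hgX)⟩

theorem exists_coset_cover_sup_eq_top (h : MinimalCoverUnder 𝒳 M p) {A : Subgroup G} [A.Normal]
    (hpA : ¬ p ∣ A.index) : ∃ g : G, ∀ d ∈ A ⊓ M,
      ∃ X ∈ (𝒳.filter fun X => ¬ X ≤ M).filter (· ⊔ A ⊓ M = ⊤), g * d ∈ X := by
  have := h.normal
  set ℰ := 𝒳.filter fun X => ¬ X ≤ M
  set D := A ⊓ M
  obtain ⟨g, hg⟩ := h.isMinimalCover.exists_forall_notMem_sup h.card_filter_not_le_lt D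
  obtain ⟨a, haA, haM⟩ := SetLike.not_le_iff_exists.mp fun hAM : A ≤ M =>
    hpA (h.index_eq ▸ Subgroup.index_dvd_of_le hAM)
  -- `A ≤ X ⊔ D` for `X ∈ ℰ`, so we may move `g` out of `M` by a factor from `A`
  obtain ⟨g', hg'M, hg'⟩ : ∃ g' ∉ M, ∀ X ∈ ℰ, X ⊔ D ≠ ⊤ → g' ∉ X ⊔ D := by
    by_cases hgM : g ∈ M
    · refine ⟨g * a, fun hgaM => haM (by simpa using mul_mem (inv_mem hgM) hgaM),
        fun X hX hXD hgaX => ?_⟩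
      have hAX := Subgroup.le_sup_inf_of_not_dvd_index h.prime h.index_eq hpA
        (Finset.mem_filter.mp hX).2
      exact hg X hX hXD (by simpa using mul_mem hgaX (inv_mem (hAX haA)))
    · exact ⟨g, hgM, hg⟩
  refine ⟨g', fun d hd => ?_⟩
  obtain ⟨X, hXℰ, hgX⟩ := h.isMinimalCover.1.coset_cover_filter_not_le hg'M d hd.2
  refine ⟨X, Finset.mem_filter.mpr ⟨hXℰ, by_contra fun hXD => hg' X hXℰ hXD ?_⟩, hgX⟩
  simpa using mul_mem (Subgroup.mem_sup_left hgX) (inv_mem (Subgroup.mem_sup_right hd))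

variable [Finite G]

theorem le_index (h : MinimalCoverUnder 𝒳 M p) : ∀ Y ∈ 𝒳, p ≤ Y.index := by
  intro Y hY
  by_contra! hYp
  obtain ⟨A, hA, hpA, hAle⟩ :=
    Subgroup.exists_normal_not_dvd_index_le h.prime (𝒳.filter (·.index < p)) (by simp)
  have hsmall : ∀ X ∈ 𝒳, X.index < p → X ⊔ A ⊓ M = X := fun X hX hXp =>
    sup_eq_left.mpr (inf_le_left.trans (hAle X (Finset.mem_filter.mpr ⟨hX, hXp⟩)))
  obtain ⟨g, hcov⟩ := h.exists_coset_cover_sup_eq_top hpA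
  set ℰ := 𝒳.filter fun X => ¬ X ≤ M
  set ℱ := ℰ.filter (· ⊔ A ⊓ M = ⊤)
  have := h.normal
  have hℱ : p ≤ ℱ.card := Subgroup.le_card_of_coset_cover hcov fun X hX => by
    obtain ⟨hXℰ, hXD⟩ := Finset.mem_filter.mp hX
    have hX𝒳 := (Finset.mem_filter.mp hXℰ).1
    rw [Subgroup.relIndex_eq_index_of_sup_eq_top hXD]
    by_contra! hXp
    exact h.isMinimalCover.1.1 X hX𝒳 (hsmall X hX𝒳 hXp ▸ hXD)
  have hYℰ : Y ∈ ℰ := Finset.mem_filter.mpr ⟨hY, fun hYM =>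
    (h.index_eq ▸ Subgroup.index_antitone hYM : p ≤ Y.index).not_gt hYp⟩
  have : ℱ.card < ℰ.card := Finset.card_lt_card (Finset.filter_ssubset.mpr
    ⟨Y, hYℰ, fun hYD => h.isMinimalCover.1.1 Y hY (hsmall Y hY hYp ▸ hYD)⟩)
  have : ℰ.card < 𝒳.card := h.card_filter_not_le_lt
  have := h.isMinimalCover.2
  have := h.covNum_le
  omega

theorem relIndex_eq_index (h : MinimalCoverUnder 𝒳 M p) {X : Subgroup G} (hXM : ¬ X ≤ M) :
    X.relIndex M = X.index :=
  have := h.normal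
  Subgroup.relIndex_eq_index_of_sup_eq_top
    (Subgroup.sup_eq_top_of_index_eq_prime h.prime h.index_eq hXM)

theorem le_relIndex (h : MinimalCoverUnder 𝒳 M p) :
    ∀ X ∈ 𝒳.filter fun X => ¬ X ≤ M, p ≤ X.relIndex M := fun X hX =>
  (h.relIndex_eq_index (Finset.mem_filter.mp hX).2).symm ▸ h.le_index X (Finset.mem_filter.mp hX).1

theorem card_filter_not_le (h : MinimalCoverUnder 𝒳 M p) :
    (𝒳.filter fun X => ¬ X ≤ M).card = p := by
  obtain ⟨g, hg⟩ := h.exists_notMem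
  refine le_antisymm ?_ (Subgroup.le_card_of_coset_cover
    (h.isMinimalCover.1.coset_cover_filter_not_le hg) h.le_relIndex)
  have := h.card_filter_not_le_lt
  have := h.isMinimalCover.2
  have := h.covNum_le
  omega

theorem card_eq (h : MinimalCoverUnder 𝒳 M p) : 𝒳.card = p + 1 := by
  have := h.card_filter_not_le
  have := h.card_filter_not_le_lt
  have := h.isMinimalCover.2
  have := h.covNum_le
  omega

theorem index_eq_of_not_le (h : MinimalCoverUnder 𝒳 M p) {X : Subgroup G} (hX : X ∈ 𝒳)
    (hXM : ¬ X ≤ M) : X.index = p := by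
  obtain ⟨g, hg⟩ := h.exists_notMem
  rw [← h.relIndex_eq_index hXM]
  exact Subgroup.relIndex_eq_of_coset_cover_of_card_eq
    (h.isMinimalCover.1.coset_cover_filter_not_le hg) h.le_relIndex h.card_filter_not_le X
    (Finset.mem_filter.mpr ⟨hX, hXM⟩)

theorem index_inf_eq (h : MinimalCoverUnder 𝒳 M p) {X : Subgroup G} (hX : X ∈ 𝒳)
    (hXM : ¬ X ≤ M) : (X ⊓ M).index = p * p := by
  have := h.normal
  rw [Subgroup.index_inf_eq_mul_of_sup_eq_top
    (Subgroup.sup_eq_top_of_index_eq_prime h.prime h.index_eq hXM), h.index_eq_of_not_le hX hXM,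
    h.index_eq]

theorem inf_le_of_not_le (h : MinimalCoverUnder 𝒳 M p) {X Y : Subgroup G} (hX : X ∈ 𝒳)
    (hY : Y ∈ 𝒳) (hXM : ¬ X ≤ M) (hYM : ¬ Y ≤ M) (hXY : X ≠ Y) : X ⊓ Y ≤ M := by
  rintro y ⟨hyX, hyY⟩
  by_contra hyM
  have hsum : ∑ Z ∈ 𝒳.filter (fun Z => ¬ Z ≤ M), (Z.relIndex M : ℚ)⁻¹ = 1 := by
    rw [Finset.sum_congr rfl fun Z hZ => by
        rw [h.relIndex_eq_index (Finset.mem_filter.mp hZ).2,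
          h.index_eq_of_not_le (Finset.mem_filter.mp hZ).1 (Finset.mem_filter.mp hZ).2],
      Finset.sum_const, h.card_filter_not_le, nsmul_eq_mul,
      mul_inv_cancel₀ (by exact_mod_cast h.prime.ne_zero)]
  exact Subgroup.notMem_of_coset_cover_of_sum_eq_one
    (h.isMinimalCover.1.coset_cover_filter_not_le hyM) hsum (Finset.mem_filter.mpr ⟨hX, hXM⟩)
    (Finset.mem_filter.mpr ⟨hY, hYM⟩) hXY M.one_mem (by simpa using hyX) (by simpa using hyY)

theorem inf_eq_inf_of_not_le (h : MinimalCoverUnder 𝒳 M p) {X Y : Subgroup G} (hX : X ∈ 𝒳)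
    (hY : Y ∈ 𝒳) (hXM : ¬ X ≤ M) (hYM : ¬ Y ≤ M) : X ⊓ M = Y ⊓ M := by
  by_cases hXY : X = Y
  · rw [hXY]
  have hXYM := h.inf_le_of_not_le hX hY hXM hYM hXY
  have hidx : (X ⊓ Y).index ≤ p * p := Subgroup.index_inf_le.trans_eq <| by
    rw [h.index_eq_of_not_le hX hXM, h.index_eq_of_not_le hY hYM]
  have hX' : X ⊓ Y = X ⊓ M := Subgroup.eq_of_le_of_index_le (le_inf inf_le_left hXYM)
    (hidx.trans (h.index_inf_eq hX hXM).ge)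
  have hY' : X ⊓ Y = Y ⊓ M := Subgroup.eq_of_le_of_index_le (le_inf inf_le_right hXYM)
    (hidx.trans (h.index_inf_eq hY hYM).ge)
  rw [← hX', hY']

theorem eq_of_le (h : MinimalCoverUnder 𝒳 M p) {X : Subgroup G} (hX : X ∈ 𝒳) (hXM : X ≤ M) :
    X = M := by
  obtain ⟨X₀, hX₀⟩ : (𝒳.filter fun X => ¬ X ≤ M).Nonempty :=
    Finset.card_pos.mp (h.card_filter_not_le ▸ h.prime.pos)
  obtain ⟨hX₀𝒳, hX₀M⟩ := Finset.mem_filter.mp hX₀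
  have hunique : ∀ Z ∈ 𝒳, Z ≤ M → Z = X := by
    have hcard : (𝒳.filter (· ≤ M)).card ≤ 1 := by
      have := Finset.card_filter_add_card_filter_not (s := 𝒳) (· ≤ M)
      have := h.card_filter_not_le
      have := h.card_eq
      omega
    exact fun Z hZ hZM => Finset.card_le_one.mp hcard Z (Finset.mem_filter.mpr ⟨hZ, hZM⟩) X
      (Finset.mem_filter.mpr ⟨hX, hXM⟩)
  refine le_antisymm hXM (Subgroup.le_of_diff_subset (K := X₀ ⊓ M) (fun hle => hX₀M ?_) ?_)
  · refine (Subgroup.eq_of_le_of_index_le (hle.trans inf_le_left) ?_).ge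
    rw [h.index_eq, h.index_eq_of_not_le hX₀𝒳 hX₀M]
  · rintro m ⟨hmM, hmR⟩
    obtain ⟨Z, hZ, hmZ⟩ := h.isMinimalCover.1.2 m
    by_cases hZM : Z ≤ M
    · exact hunique Z hZ hZM ▸ hmZ
    · exact absurd (h.inf_eq_inf_of_not_le hZ hX₀𝒳 hZM hX₀M ▸ ⟨hmZ, hmM⟩) hmR

theorem index_eq_of_mem (h : MinimalCoverUnder 𝒳 M p) : ∀ X ∈ 𝒳, X.index = p := fun X hX =>
  if hXM : X ≤ M then h.eq_of_le hX hXM ▸ h.index_eq else h.index_eq_of_not_le hX hXM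

theorem iInf_eq (h : MinimalCoverUnder 𝒳 M p) {X₀ : Subgroup G} (hX₀ : X₀ ∈ 𝒳)
    (hX₀M : ¬ X₀ ≤ M) : ⨅ X ∈ 𝒳, X = X₀ ⊓ M := by
  obtain ⟨X₁, hX₁, hX₁M⟩ := h.exists_le
  have hM : M ∈ 𝒳 := h.eq_of_le hX₁ hX₁M ▸ hX₁
  refine le_antisymm (le_inf (iInf₂_le X₀ hX₀) (iInf₂_le M hM)) (le_iInf₂ fun X hX => ?_)
  by_cases hXM : X ≤ M
  · rw [h.eq_of_le hX hXM]
    exact inf_le_right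
  · rw [h.inf_eq_inf_of_not_le hX₀ hX hX₀M hXM]
    exact inf_le_left

theorem index_iInf (h : MinimalCoverUnder 𝒳 M p) : (⨅ X ∈ 𝒳, X).index = p ^ 2 := by
  obtain ⟨X₀, hX₀, hX₀M⟩ := h.exists_mem_not_le
  rw [h.iInf_eq hX₀ hX₀M, h.index_inf_eq hX₀ hX₀M, sq]

theorem normal_of_mem (h : MinimalCoverUnder 𝒳 M p) : ∀ X ∈ 𝒳, X.Normal := by
  have := h.normal
  have : Fact p.Prime := ⟨h.prime⟩
  obtain ⟨g, hg⟩ := h.exists_notMem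
  obtain ⟨X₀, hX₀, hX₀M⟩ := h.exists_mem_not_le
  have hR : (X₀ ⊓ M).Normal := by
    rw [← Subgroup.normalizer_eq_top_iff, eq_top_iff]
    refine Subgroup.le_of_diff_subset (K := M) (fun hle => hg (hle trivial)) ?_
    rintro x ⟨-, hxM⟩
    obtain ⟨X, hX, hxX⟩ := h.isMinimalCover.1.2 x
    rw [h.inf_eq_inf_of_not_le hX₀ hX hX₀M fun hle => hxM (hle hxX), inf_comm]
    exact Subgroup.normal_subgroupOf_iff_le_normalizer_inf.mp inferInstance hxX
  have hcomm := IsPGroup.isMulCommutative_of_card_eq_prime_sq (G := G ⧸ X₀ ⊓ M) (p := p) <| by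
    rw [← Subgroup.index_eq_card, h.index_inf_eq hX₀ hX₀M, sq]
  exact fun X hX => .of_commutator_le _ <|
    (Subgroup.Normal.quotient_commutative_iff_commutator_le.mp hcomm).trans
      (h.iInf_eq hX₀ hX₀M ▸ iInf₂_le X hX)

end MinimalCoverUnder

theorem stmt12 (H₁ H₂ : Type*) [Group H₁] [Group H₂] [Finite H₁] [Finite H₂]
    (𝒳 : Finset (Subgroup (H₁ × H₂))) (hmin : IsMinimalCover 𝒳)
    (p : ℕ) (hp : p.Prime)
    (hdiag : ∃ X ∈ 𝒳, ∃ M : Subgroup (H₁ × H₂),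
      IsCoatom M ∧ IsDiagonalType M ∧ M.index = p ∧ X ≤ M) :
    covNum (H₁ × H₂) = p + 1 ∧ (∀ X ∈ 𝒳, X.Normal ∧ X.index = p) ∧
      (⨅ X ∈ 𝒳, X).index = p ^ 2 := by
  obtain ⟨X₁, hX₁, M, -, hMdiag, hMp, hX₁M⟩ := hdiag
  obtain ⟨hMn, hcov⟩ := hMdiag.normal_and_covNum_le hp hMp
  have h : MinimalCoverUnder 𝒳 M p := ⟨hmin, hp, hMn, hMp, ⟨X₁, hX₁, hX₁M⟩, hcov⟩
  exact ⟨hmin.2 ▸ h.card_eq, fun X hX => ⟨h.normal_of_mem X hX, h.index_eq_of_mem X hX⟩,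
    h.index_iInf⟩
end

section
/- Let 𝒳 = {X₁,…,X_σ} be a minimal cover of G = H₁ × H₂ in which no member is contained in a maximal subgroup of diagonal type of prime index. Then either H₁ × 1 or 1 × H₂ is contained in the intersection of all the X_i. -/
/-!
Enlarge each member `X` of the cover to a maximal subgroup `M X`, and write `N₁ = H₁ × 1`,
`N₂ = 1 × H₂`. A maximal subgroup containing neither `N₁` nor `N₂` projects onto both factors, so by
Goursat's lemma it is the graph of an isomorphism `H₁/K₁ ≅ H₂/K₂`, and maximality makes these
quotients simple. By hypothesis they are not abelian, so no `⟨w⟩K₂` is all of `H₂`, and no `⟨v⟩K₁`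
is all of `H₁`.

If some but not all `M X` contain `N₂`, pick `g` outside all those that do (fewer than `σ` proper
subgroups do not cover). The other `M X` cover the coset `gN₂`, each meeting it in a coset of
`K₂(M X)` that lies in a proper subgroup `⟨w⟩K₂(M X)` of `H₂`; this covers `H₂`, hence `G`, by fewer
than `σ` subgroups. So either all or none of the `M X` contain `N₂`, and likewise for `N₁`. If all
contain `N₂`, minimality forces every `X` to contain `N₂`. If none contains `N₁` or `N₂`, every
`K₁(M X)` has a nonabelian simple, hence perfect, quotient; then the intersection of any of these
kernels maps onto the quotient by any other, so some `x ∈ H₁` avoids all of them and `(x, 1)` lies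
in no `X`.
-/

open Finset

section Cover

variable {G Q : Type*} [Group G] [Group Q]

open Subgroup

theorem covNum_le_card {𝒞 : Finset (Subgroup G)} (h : IsCover 𝒞) : covNum G ≤ 𝒞.card :=
  Nat.sInf_le ⟨𝒞, h, rfl⟩

theorem covNum_le_card_of_surjective {f : G →* Q}
    (hf : Function.Surjective f) {𝒞 : Finset (Subgroup Q)} (h : IsCover 𝒞) :
    covNum G ≤ 𝒞.card := by
  classical
  refine (covNum_le_card (𝒞 := 𝒞.image (Subgroup.comap f)) ⟨?_, fun g => ?_⟩).trans
    card_image_le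
  · simp only [mem_image, forall_exists_index, and_imp, forall_apply_eq_imp_iff₂]
    intro X hX htop
    apply h.1 X hX
    rw [← Subgroup.map_comap_eq_self_of_surjective hf X, htop, ← MonoidHom.range_eq_map,
      MonoidHom.range_eq_top.2 hf]
  · obtain ⟨X, hX, hgX⟩ := h.2 (f g)
    exact ⟨X.comap f, mem_image_of_mem _ hX, hgX⟩

theorem IsMinimalCover.exists_forall_notMem {𝒳 𝒞 : Finset (Subgroup G)} (hmin : IsMinimalCover 𝒳)
    (hproper : ∀ X ∈ 𝒞, X ≠ ⊤) (hlt : 𝒞.card < 𝒳.card) : ∃ g : G, ∀ X ∈ 𝒞, g ∉ X := by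
  by_contra! h
  have := covNum_le_card ⟨hproper, h⟩
  have := hmin.2
  omega

theorem IsMinimalCover.forall_le_of_forall_le {𝒳 : Finset (Subgroup G)} (hmin : IsMinimalCover 𝒳)
    {M : Subgroup G → Subgroup G} (hXM : ∀ X ∈ 𝒳, X ≤ M X) (hM : ∀ X ∈ 𝒳, M X ≠ ⊤)
    {N : Subgroup G} (hN : ∀ X ∈ 𝒳, N ≤ M X) : ∀ X ∈ 𝒳, N ≤ X := by
  classical
  intro Y hY n hn
  obtain ⟨g, hg⟩ := hmin.exists_forall_notMem (𝒞 := (𝒳.erase Y).image M)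
    (forall_mem_image.2 fun X hX => hM X (mem_of_mem_erase hX))
    (card_image_le.trans_lt (card_erase_lt_of_mem hY))
  have hcoset : ∀ m ∈ N, g * m ∈ Y := by
    intro m hm
    obtain ⟨X, hX, hgmX⟩ := hmin.1.2 (g * m)
    by_cases hXY : X = Y
    · exact hXY ▸ hgmX
    refine absurd ?_ (hg (M X) (mem_image_of_mem M (mem_erase.2 ⟨hXY, hX⟩)))
    simpa using mul_mem (hXM X hX hgmX) (inv_mem (hN X hX hm))
  simpa using mul_mem (inv_mem (hcoset 1 N.one_mem)) (hcoset n hn)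

theorem covNum_le_card_of_coset_cover {p : G →* Q} (hp : Function.Surjective p) (s : Q →* G)
    (g : G) {𝓜 : Finset (Subgroup G)} (hcov : ∀ q, ∃ M ∈ 𝓜, g * s q ∈ M)
    (hproper : ∀ M ∈ 𝓜, ∀ q, g * s q ∈ M → zpowers q ⊔ M.comap s ≠ ⊤) :
    covNum G ≤ 𝓜.card := by
  classical
  choose! w hw using fun (M : Subgroup G) (hM : ∃ q, g * s q ∈ M) => hM
  refine (covNum_le_card_of_surjective hp (𝒞 := (𝓜.filter fun M => ∃ q, g * s q ∈ M).image
    fun M => zpowers (w M) ⊔ M.comap s) ⟨?_, fun q => ?_⟩).trans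
    (card_image_le.trans (card_filter_le _ _))
  · simp only [forall_mem_image, mem_filter]
    rintro M ⟨hM, hq⟩
    exact hproper M hM _ (hw M hq)
  · obtain ⟨M, hM, hqM⟩ := hcov q
    refine ⟨_, mem_image_of_mem _ (mem_filter.2 ⟨hM, q, hqM⟩), ?_⟩
    -- the slice `{q | g * s q ∈ M}` is the coset `w M * M.comap s`
    have hslice : (w M)⁻¹ * q ∈ M.comap s := by
      simpa [mul_assoc] using mul_mem (inv_mem (hw M ⟨q, hqM⟩)) hqM
    simpa using mul_mem_sup (mem_zpowers (w M)) hslice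

theorem IsMinimalCover.forall_range_le_or_forall_not_range_le {𝒳 : Finset (Subgroup G)}
    (hmin : IsMinimalCover 𝒳) {p : G →* Q} {s : Q →* G} (hps : ∀ q, p (s q) = q)
    {M : Subgroup G → Subgroup G} (hXM : ∀ X ∈ 𝒳, X ≤ M X) (hM : ∀ X ∈ 𝒳, M X ≠ ⊤)
    (hcyc : ∀ X ∈ 𝒳, ¬ s.range ≤ M X → ¬ p.ker ≤ M X → ∀ q, zpowers q ⊔ (M X).comap s ≠ ⊤) :
    (∀ X ∈ 𝒳, s.range ≤ M X) ∨ ∀ X ∈ 𝒳, ¬ s.range ≤ M X := by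
  classical
  refine or_iff_not_imp_left.2 fun hsome => ?_
  have hlt : (𝒳.filter fun X => s.range ≤ M X).card < 𝒳.card :=
    card_lt_card (filter_ssubset.2 (by simpa using hsome))
  obtain ⟨g₀, hg₀⟩ := hmin.exists_forall_notMem (𝒞 := (𝒳.filter fun X => s.range ≤ M X).image M)
    (forall_mem_image.2 fun X hX => hM X (mem_filter.1 hX).1) (card_image_le.trans_lt hlt)
  set g := g₀ * s (p g₀)⁻¹
  -- moving `g₀` within `g₀ * s.range` to reach `p g = 1` keeps it outside every `M X ≥ s.range`
  have hmiss : ∀ X ∈ 𝒳, s.range ≤ M X → ∀ q, g * s q ∉ M X := by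
    intro X hX hT q hq
    refine hg₀ (M X) (mem_image_of_mem M (mem_filter.2 ⟨hX, hT⟩)) ?_
    simpa [g, mul_assoc] using mul_mem hq (inv_mem (hT ⟨(p g₀)⁻¹ * q, rfl⟩))
  have hle := covNum_le_card_of_coset_cover (fun q => ⟨s q, hps q⟩) s g
    (𝓜 := (𝒳.filter fun X => ¬ s.range ≤ M X).image M) (fun q => ?_) ?_
  · have hsplit := card_filter_add_card_filter_not (s := 𝒳) (fun X => s.range ≤ M X)
    have := card_image_le (s := 𝒳.filter fun X => ¬ s.range ≤ M X) (f := M)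
    have := hmin.2
    have hnone : (𝒳.filter fun X => s.range ≤ M X).card = 0 := by omega
    simpa [filter_eq_empty_iff] using hnone
  · obtain ⟨X, hX, hqX⟩ := hmin.1.2 (g * s q)
    exact ⟨M X, mem_image_of_mem _ (mem_filter.2 ⟨hX, fun hT => hmiss X hX hT q (hXM X hX hqX)⟩),
      hXM X hX hqX⟩
  · simp only [forall_mem_image, mem_filter]
    rintro X ⟨hX, hT⟩ q hq
    by_cases hker : p.ker ≤ M X
    · have hg : g ∈ M X := hker (by simp [g, hps])
      have hq' : q ∈ (M X).comap s := by simpa using mul_mem (inv_mem hg) hq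
      rw [sup_eq_right.2 (zpowers_le.2 hq')]
      intro htop
      exact hT (by rw [MonoidHom.range_eq_map, map_le_iff_le_comap, htop])
    · exact hcyc X hX hT hker q

end Cover

section SimpleQuotient

variable {H : Type*} [Group H]

open Subgroup QuotientGroup

def Subgroup.HasNonabelianSimpleQuotient (K : Subgroup H) : Prop :=
  ∃ _ : K.Normal, IsSimpleGroup (H ⧸ K) ∧ ¬ IsMulCommutative (H ⧸ K)

theorem IsSimpleGroup.commutator_eq_top [IsSimpleGroup H] (h : ¬ IsMulCommutative H) :
    _root_.commutator H = ⊤ :=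
  (eq_bot_or_eq_top_of_normal _ inferInstance).resolve_left fun h' =>
    h ((commutator_eq_bot_iff H).1 h')

theorem Subgroup.zpowers_sup_ne_top {K : Subgroup H} [K.Normal]
    (h : ¬ IsMulCommutative (H ⧸ K)) (q : H) : zpowers q ⊔ K ≠ ⊤ := by
  intro htop
  have : IsCyclic (H ⧸ K) := isCyclic_iff_exists_zpowers_eq_top.2 ⟨q, by
    change zpowers (mk' K q) = ⊤
    rw [← (mk' K).map_zpowers, ← sup_bot_eq (map _ _), ← map_mk'_self K, ← map_sup, htop,
      ← MonoidHom.range_eq_map, range_mk']⟩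
  exact h inferInstance

theorem Subgroup.map_mk'_eq_top_of_ne {K K' : Subgroup H} [K.Normal] [K'.Normal]
    [IsSimpleGroup (H ⧸ K)] [IsSimpleGroup (H ⧸ K')] (hne : K' ≠ K) : K'.map (mk' K) = ⊤ := by
  refine (IsSimpleGroup.eq_bot_or_eq_top_of_normal _
    ((inferInstance : K'.Normal).map _ (mk'_surjective K))).resolve_left fun hbot => ?_
  rw [map_eq_bot_iff, ker_mk'] at hbot
  rcases IsSimpleGroup.eq_bot_or_eq_top_of_normal _
    ((inferInstance : K.Normal).map _ (mk'_surjective K')) with hbot' | htop'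
  · rw [map_eq_bot_iff, ker_mk'] at hbot'
    exact hne (le_antisymm hbot hbot')
  · have hK : K = ⊤ := by
      rw [← comap_map_eq_self (show (mk' K').ker ≤ K by rwa [ker_mk']), htop', comap_top]
    exact (QuotientGroup.nontrivial_iff.1 inferInstance) hK

theorem Subgroup.map_mk'_iInf_eq_top {K : Subgroup H} [K.Normal] [IsSimpleGroup (H ⧸ K)]
    (hK : ¬ IsMulCommutative (H ⧸ K)) {𝒦 : Finset (Subgroup H)}
    (h𝒦 : ∀ K' ∈ 𝒦, K'.HasNonabelianSimpleQuotient) (hK𝒦 : K ∉ 𝒦) :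
    (⨅ K' ∈ 𝒦, K').map (mk' K) = ⊤ := by
  classical
  induction 𝒦 using Finset.induction_on with
  | empty => simpa using map_top_of_surjective _ (mk'_surjective K)
  | insert K' 𝒦 _ ih =>
    obtain ⟨_, _, -⟩ := h𝒦 K' (mem_insert_self _ _)
    have hK' : K'.map (mk' K) = ⊤ := map_mk'_eq_top_of_ne fun h => hK𝒦 (h ▸ mem_insert_self _ _)
    have hD : (⨅ K'' ∈ 𝒦, K'').map (mk' K) = ⊤ :=
      ih (fun K'' h => h𝒦 K'' (mem_insert_of_mem h)) fun h => hK𝒦 (mem_insert_of_mem h)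
    have : (⨅ K'' ∈ 𝒦, K'').Normal := normal_iInf_normal fun K'' =>
      normal_iInf_normal fun h => (h𝒦 K'' (mem_insert_of_mem h)).1
    rw [Finset.iInf_insert, eq_top_iff]
    calc ⊤ = _root_.commutator (H ⧸ K) := (IsSimpleGroup.commutator_eq_top hK).symm
      _ = ⁅K'.map (mk' K), (⨅ K'' ∈ 𝒦, K'').map (mk' K)⁆ := by rw [hK', hD, _root_.commutator_def]
      _ = ⁅K', ⨅ K'' ∈ 𝒦, K''⁆.map (mk' K) := (map_commutator _ _ _).symm
      _ ≤ (K' ⊓ ⨅ K'' ∈ 𝒦, K'').map (mk' K) :=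
        map_mono (le_inf (commutator_le_left _ _) (commutator_le_right _ _))

theorem exists_forall_notMem_of_hasNonabelianSimpleQuotient (𝒦 : Finset (Subgroup H))
    (h𝒦 : ∀ K ∈ 𝒦, K.HasNonabelianSimpleQuotient) : ∃ x : H, ∀ K ∈ 𝒦, x ∉ K := by
  classical
  induction 𝒦 using Finset.induction_on with
  | empty => exact ⟨1, by simp⟩
  | insert K 𝒦 hK ih =>
    obtain ⟨x, hx⟩ := ih fun K' h => h𝒦 K' (mem_insert_of_mem h)
    obtain ⟨_, _, hKc⟩ := h𝒦 K (mem_insert_self _ _)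
    obtain ⟨q, hq⟩ := exists_ne (mk' K x)⁻¹
    obtain ⟨δ, hδ, rfl⟩ : q ∈ (⨅ K' ∈ 𝒦, K').map (mk' K) := by
      rw [map_mk'_iInf_eq_top hKc (fun K' h => h𝒦 K' (mem_insert_of_mem h)) hK]
      exact mem_top q
    refine ⟨x * δ, (forall_mem_insert _ _ _).2 ⟨fun hxδ => hq ?_, fun K' hK' hxδ => hx K' hK' ?_⟩⟩
    · refine eq_inv_of_mul_eq_one_right ?_
      rw [← map_mul]
      exact (QuotientGroup.eq_one_iff _).2 hxδ
    · have : δ ∈ K' := Subgroup.mem_iInf.1 (Subgroup.mem_iInf.1 hδ K') hK'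
      simpa using mul_mem hxδ (inv_mem this)

end SimpleQuotient

theorem MonoidHom.range_inl {H₁ H₂ : Type*} [Group H₁] [Group H₂] :
    (MonoidHom.inl H₁ H₂).range = (⊤ : Subgroup H₁).prod ⊥ := by
  ext ⟨a, b⟩
  simp [eq_comm, Subgroup.mem_prod]

theorem MonoidHom.range_inr {H₁ H₂ : Type*} [Group H₁] [Group H₂] :
    (MonoidHom.inr H₁ H₂).range = (⊥ : Subgroup H₁).prod ⊤ := by
  ext ⟨a, b⟩
  simp [eq_comm, Subgroup.mem_prod]

theorem IsCoatom.surjective_comp_subtype {G Q : Type*} [Group G] [Group Q] {M : Subgroup G}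
    (hM : IsCoatom M) {f : G →* Q} (hf : Function.Surjective f) (h : ¬ f.ker ≤ M) :
    Function.Surjective (f ∘ M.subtype) := by
  intro q
  obtain ⟨g, rfl⟩ := hf q
  have hg : g ∈ M ⊔ f.ker := by
    rw [(hM.le_iff.1 le_sup_left).resolve_right fun h' => h (h' ▸ le_sup_right)]
    exact Subgroup.mem_top g
  obtain ⟨m, hm, k, hk, rfl⟩ := Subgroup.mem_sup_of_normal_right.1 hg
  exact ⟨⟨m, hm⟩, by simp [f.mem_ker.1 hk]⟩

section Goursat

variable {H₁ H₂ : Type*} [Group H₁] [Group H₂] {M : Subgroup (H₁ × H₂)}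

open Subgroup QuotientGroup

theorem Subgroup.exists_mulEquiv_mem_iff (h₁ : Function.Surjective (Prod.fst ∘ M.subtype))
    (h₂ : Function.Surjective (Prod.snd ∘ M.subtype)) [M.goursatFst.Normal] [M.goursatSnd.Normal] :
    ∃ e : H₁ ⧸ M.goursatFst ≃* H₂ ⧸ M.goursatSnd, ∀ x y, (x, y) ∈ M ↔ e x = y := by
  obtain ⟨e, he⟩ := goursat_surjective h₁ h₂
  refine ⟨e, fun x y => ⟨fun hxy => ?_, fun hxy => ?_⟩⟩
  · have : ((x : H₁ ⧸ M.goursatFst), (y : H₂ ⧸ M.goursatSnd)) ∈ e.toMonoidHom.graph :=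
      he ▸ ⟨⟨(x, y), hxy⟩, rfl⟩
    exact MonoidHom.mem_graph.1 this
  · obtain ⟨⟨⟨a, b⟩, hab⟩, habxy⟩ : ((x : H₁ ⧸ M.goursatFst), (y : H₂ ⧸ M.goursatSnd)) ∈
        (((mk' M.goursatFst).prodMap (mk' M.goursatSnd)).comp M.subtype).range :=
      he ▸ MonoidHom.mem_graph.2 hxy
    have : (a⁻¹ * x, b⁻¹ * y) ∈ M := goursatFst_prod_goursatSnd_le M
      ⟨QuotientGroup.eq.1 (congrArg Prod.fst habxy), QuotientGroup.eq.1 (congrArg Prod.snd habxy)⟩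
    simpa using mul_mem hab this

theorem Subgroup.index_eq_card_of_mem_iff {K₁ : Subgroup H₁} {K₂ : Subgroup H₂} [K₁.Normal]
    [K₂.Normal] (e : H₁ ⧸ K₁ ≃* H₂ ⧸ K₂) (he : ∀ x y, (x, y) ∈ M ↔ e x = y) :
    M.index = Nat.card (H₂ ⧸ K₂) := by
  -- `g ↦ g.2 * e (g.1)⁻¹` separates the left cosets of `M`
  set f : H₁ × H₂ → H₂ ⧸ K₂ := fun g => (g.2 : H₂ ⧸ K₂) * (e g.1)⁻¹
  have hf : Function.Surjective f := by
    intro q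
    obtain ⟨y, rfl⟩ := mk_surjective q
    exact ⟨(1, y), by simp [f]⟩
  have hrel : ∀ g g', leftRel M g g' ↔ Setoid.ker f g g' := by
    rintro ⟨a, b⟩ ⟨a', b'⟩
    rw [leftRel_apply, Setoid.ker_def, Prod.inv_mk, Prod.mk_mul_mk, he]
    simp only [f, QuotientGroup.mk_mul, QuotientGroup.mk_inv, map_mul, map_inv]
    rw [eq_inv_mul_iff_mul_eq, ← mul_assoc, eq_mul_inv_iff_mul_eq]
  rw [index_eq_card]
  exact Nat.card_congr ((Quotient.congrRight hrel).trans (Setoid.quotientKerEquivOfSurjective f hf))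

theorem IsCoatom.isSimpleGroup_quotient_goursatFst (hM : IsCoatom M) [M.goursatFst.Normal]
    [M.goursatSnd.Normal] {e : H₁ ⧸ M.goursatFst ≃* H₂ ⧸ M.goursatSnd}
    (he : ∀ x y, (x, y) ∈ M ↔ e x = y) (hK : M.goursatFst ≠ ⊤) :
    IsSimpleGroup (H₁ ⧸ M.goursatFst) := by
  have : Nontrivial (H₁ ⧸ M.goursatFst) := QuotientGroup.nontrivial_iff.2 hK
  refine ⟨fun W hW => ?_⟩
  set N := W.comap (mk' M.goursatFst)
  have : N.Normal := hW.comap _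
  -- `W` corresponds to the subgroup `M ⊔ (N × 1)` between `M` and `⊤`
  rcases hM.le_iff.1 (le_sup_left : M ≤ M ⊔ N.prod ⊥) with htop | hsup
  · refine Or.inr (eq_top_iff' W |>.2 fun q => ?_)
    obtain ⟨y, hy⟩ := mk_surjective (e q)
    obtain ⟨m, hm, ⟨a, b⟩, ⟨ha, hb⟩, hmab⟩ :=
      mem_sup_of_normal_right.1 (htop ▸ mem_top (1, y) : ((1 : H₁), y) ∈ M ⊔ N.prod ⊥)
    obtain rfl : b = 1 := mem_bot.1 hb
    rw [eq_mul_inv_iff_mul_eq.2 hmab] at hm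
    have : e (a⁻¹ : H₁) = e q := by simpa [hy] using (he _ _).1 hm
    rw [← e.injective this]
    exact (N.inv_mem ha : a⁻¹ ∈ N)
  · refine Or.inl (eq_bot_iff_forall W |>.2 fun q hq => ?_)
    obtain ⟨x, rfl⟩ := mk_surjective q
    have : (x, (1 : H₂)) ∈ M := hsup ▸ mem_sup_right ⟨hq, one_mem _⟩
    exact (QuotientGroup.eq_one_iff x).2 (mem_goursatFst.2 this)

theorem IsCoatom.hasNonabelianSimpleQuotient_goursat (hM : IsCoatom M)
    (h₁ : ¬ (⊥ : Subgroup H₁).prod ⊤ ≤ M) (h₂ : ¬ (⊤ : Subgroup H₁).prod ⊥ ≤ M)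
    (hdiag : ¬ (IsDiagonalType M ∧ M.index.Prime)) :
    M.goursatFst.HasNonabelianSimpleQuotient ∧ M.goursatSnd.HasNonabelianSimpleQuotient := by
  have hfst : Function.Surjective (Prod.fst ∘ M.subtype) :=
    hM.surjective_comp_subtype (f := MonoidHom.fst H₁ H₂) Prod.fst_surjective
      (by rwa [MonoidHom.ker_fst])
  have hsnd : Function.Surjective (Prod.snd ∘ M.subtype) :=
    hM.surjective_comp_subtype (f := MonoidHom.snd H₁ H₂) Prod.snd_surjective
      (by rwa [MonoidHom.ker_snd])
  have := normal_goursatFst hfst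
  have := normal_goursatSnd hsnd
  obtain ⟨e, he⟩ := exists_mulEquiv_mem_iff hfst hsnd
  have hK : M.goursatFst ≠ ⊤ := by
    refine fun hK => h₂ ?_
    rintro ⟨a, b⟩ ⟨-, hb⟩
    obtain rfl : b = 1 := mem_bot.1 hb
    exact mem_goursatFst.1 (hK ▸ mem_top a)
  have := hM.isSimpleGroup_quotient_goursatFst he hK
  -- an abelian simple quotient would make `M` a diagonal subgroup of prime index
  have hcomm : ¬ IsMulCommutative (H₁ ⧸ M.goursatFst) := by
    intro _
    refine hdiag ⟨⟨_, _, ‹_›, ‹_›, ‹_›, e, Set.ext fun x => he x.1 x.2⟩, ?_⟩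
    rw [index_eq_card_of_mem_iff e he, ← Nat.card_congr e.toEquiv]
    exact Group.is_simple_iff_prime_card.1 ‹_›
  refine ⟨⟨_, ‹_›, hcomm⟩, ⟨_, e.symm.isSimpleGroup, fun _ => hcomm ⟨⟨fun a b => ?_⟩⟩⟩⟩
  exact e.injective (by simp only [map_mul, mul_comm'])

theorem IsCoatom.zpowers_sup_comap_inr_ne_top (hM : IsCoatom M)
    (h₁ : ¬ (⊥ : Subgroup H₁).prod ⊤ ≤ M) (h₂ : ¬ (⊤ : Subgroup H₁).prod ⊥ ≤ M)
    (hdiag : ¬ (IsDiagonalType M ∧ M.index.Prime)) (q : H₂) :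
    zpowers q ⊔ M.comap (MonoidHom.inr H₁ H₂) ≠ ⊤ := by
  obtain ⟨-, _, -, hcomm⟩ := hM.hasNonabelianSimpleQuotient_goursat h₁ h₂ hdiag
  rw [show M.comap (MonoidHom.inr H₁ H₂) = M.goursatSnd by ext; simp]
  exact zpowers_sup_ne_top hcomm q

theorem IsCoatom.zpowers_sup_comap_inl_ne_top (hM : IsCoatom M)
    (h₁ : ¬ (⊥ : Subgroup H₁).prod ⊤ ≤ M) (h₂ : ¬ (⊤ : Subgroup H₁).prod ⊥ ≤ M)
    (hdiag : ¬ (IsDiagonalType M ∧ M.index.Prime)) (q : H₁) :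
    zpowers q ⊔ M.comap (MonoidHom.inl H₁ H₂) ≠ ⊤ := by
  obtain ⟨⟨_, -, hcomm⟩, -⟩ := hM.hasNonabelianSimpleQuotient_goursat h₁ h₂ hdiag
  rw [show M.comap (MonoidHom.inl H₁ H₂) = M.goursatFst by ext; simp]
  exact zpowers_sup_ne_top hcomm q

end Goursat

theorem stmt13 (H₁ H₂ : Type*) [Group H₁] [Group H₂] [Finite H₁] [Finite H₂]
    (𝒳 : Finset (Subgroup (H₁ × H₂))) (hmin : IsMinimalCover 𝒳)
    (hnodiag : ¬ ∃ X ∈ 𝒳, ∃ M : Subgroup (H₁ × H₂),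
      IsCoatom M ∧ IsDiagonalType M ∧ M.index.Prime ∧ X ≤ M) :
    (⊤ : Subgroup H₁).prod (⊥ : Subgroup H₂) ≤ ⨅ X ∈ 𝒳, X ∨
    (⊥ : Subgroup H₁).prod (⊤ : Subgroup H₂) ≤ ⨅ X ∈ 𝒳, X := by
  classical
  choose! M hMcoatom hXM using fun X hX =>
    (eq_top_or_exists_le_coatom X).resolve_left (hmin.1.1 X hX)
  have hMtop : ∀ X ∈ 𝒳, M X ≠ ⊤ := fun X hX => (hMcoatom X hX).1
  have hdiag : ∀ X ∈ 𝒳, ¬ (IsDiagonalType (M X) ∧ (M X).index.Prime) := fun X hX hd =>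
    hnodiag ⟨X, hX, M X, hMcoatom X hX, hd.1, hd.2, hXM X hX⟩
  have hcol := hmin.forall_range_le_or_forall_not_range_le (p := MonoidHom.snd H₁ H₂)
    (s := MonoidHom.inr H₁ H₂) (fun _ => rfl) hXM hMtop fun X hX h₁ h₂ =>
      (hMcoatom X hX).zpowers_sup_comap_inr_ne_top (by rwa [MonoidHom.range_inr] at h₁)
        (by rwa [MonoidHom.ker_snd] at h₂) (hdiag X hX)
  have hrow := hmin.forall_range_le_or_forall_not_range_le (p := MonoidHom.fst H₁ H₂)
    (s := MonoidHom.inl H₁ H₂) (fun _ => rfl) hXM hMtop fun X hX h₂ h₁ =>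
      (hMcoatom X hX).zpowers_sup_comap_inl_ne_top (by rwa [MonoidHom.ker_fst] at h₁)
        (by rwa [MonoidHom.range_inl] at h₂) (hdiag X hX)
  simp only [MonoidHom.range_inr, MonoidHom.range_inl] at hcol hrow
  rcases hcol with hcol | hcol
  · exact Or.inr (le_iInf₂ (hmin.forall_le_of_forall_le hXM hMtop hcol))
  rcases hrow with hrow | hrow
  · exact Or.inl (le_iInf₂ (hmin.forall_le_of_forall_le hXM hMtop hrow))
  obtain ⟨x, hx⟩ := exists_forall_notMem_of_hasNonabelianSimpleQuotient
    (𝒳.image fun X => (M X).goursatFst) <| forall_mem_image.2 fun X hX =>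
      ((hMcoatom X hX).hasNonabelianSimpleQuotient_goursat (hcol X hX) (hrow X hX) (hdiag X hX)).1
  obtain ⟨X, hX, hxX⟩ := hmin.1.2 (x, 1)
  exact (hx _ (mem_image_of_mem _ hX) (Subgroup.mem_goursatFst.2 (hXM X hX hxX))).elim
end
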